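/- For every subset I ⊆ {1,…,n} and all λ₁, λ₂ ∈ ℂ there exist α, β ∈ ℂ such that, with c := α·Γ_I and d := β·Γ_I, one has q_{c,d}(Γ_μ) = λ₁·Γ_μ for every μ ∈ I and q_{c,d}(Γ_μ) = λ₂·Γ_μ for every μ ∉ I. In particular, every endomorphism of ℂⁿ which is diagonal in the standard basis, with eigenvalue λ₁ on the coordinates in I and λ₂ on the remaining coordinates, is associated to a monomial quadratic Clifford pair. -/

import Mathlib

noncomputable section

/-- The quadratic form `Q(v) = -∑ v μ ^ 2` on `ℂⁿ`. -/
def Qf (n : ℕ) : QuadraticForm ℂ (Fin n → ℂ) :=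
  QuadraticMap.weightedSumSquares ℂ (fun _ : Fin n => (-1 : ℂ))

/-- The Clifford algebra of `Qf n`. -/
abbrev Cl (n : ℕ) := CliffordAlgebra (Qf n)

/-- The canonical embedding `ℂⁿ → Cℓ`. -/
def emb (n : ℕ) : (Fin n → ℂ) →ₗ[ℂ] Cl n := CliffordAlgebra.ι (Qf n)

/-- `Γ_μ = ι(e_μ)`. -/
def Γg (n : ℕ) (μ : Fin n) : Cl n := emb n (Pi.single μ 1)



lemma Γg_sq (n : ℕ) (μ : Fin n) : Γg n μ * Γg n μ = -1 := by
  rw [Γg, emb, CliffordAlgebra.ι_sq_scalar]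
  have : Qf n (Pi.single μ 1) = -1 := by
    simp [Qf, QuadraticMap.weightedSumSquares_apply, Pi.single_apply]
  rw [this, map_neg, map_one]

lemma Γg_anti (n : ℕ) {μ ν : Fin n} (h : μ ≠ ν) :
    Γg n μ * Γg n ν = -(Γg n ν * Γg n μ) := by
  have key := CliffordAlgebra.ι_mul_ι_add_swap (Q := Qf n) (Pi.single μ 1) (Pi.single ν 1)
  have hz : ∀ i, (Pi.single μ 1 : Fin n → ℂ) i * (Pi.single ν 1 : Fin n → ℂ) i = 0 := by
    intro i
    by_cases h1 : i = μ <;> by_cases h2 : i = ν <;> simp_all [Pi.single_apply]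
  have hp : QuadraticMap.polar (⇑(Qf n)) (Pi.single μ 1) (Pi.single ν 1) = 0 := by
    rw [QuadraticMap.polar]
    simp only [Qf, QuadraticMap.weightedSumSquares_apply, Pi.add_apply, smul_eq_mul]
    rw [← Finset.sum_sub_distrib, ← Finset.sum_sub_distrib]
    apply Finset.sum_eq_zero
    intro i _
    linear_combination (-2 : ℂ) * hz i
  rw [hp, map_zero] at key
  exact eq_neg_of_add_eq_zero_left key

lemma prod_mul_g_notmem (n : ℕ) (l : List (Fin n)) (μ : Fin n) (h : μ ∉ l) :
    (l.map (Γg n)).prod * Γg n μ =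
      ((-1 : ℂ) ^ l.length) • (Γg n μ * (l.map (Γg n)).prod) := by
  induction l with
  | nil => simp
  | cons ν t ih =>
    have hν : μ ≠ ν := fun e => h (e ▸ (List.mem_cons_self : ν ∈ ν :: t))
    have ht : μ ∉ t := fun e => h (List.mem_cons_of_mem _ e)
    simp only [List.map_cons, List.prod_cons, List.length_cons]
    rw [mul_assoc, ih ht, mul_smul_comm, ← mul_assoc, Γg_anti n (Ne.symm hν)]
    simp only [pow_succ, mul_neg_one, neg_mul, mul_assoc, smul_neg, neg_smul, neg_neg]

lemma prod_mul_g_mem (n : ℕ) (l : List (Fin n)) (μ : Fin n) (hnd : l.Nodup) (h : μ ∈ l) :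
    (l.map (Γg n)).prod * Γg n μ =
      (-(-1 : ℂ) ^ l.length) • (Γg n μ * (l.map (Γg n)).prod) := by
  induction l with
  | nil => simp at h
  | cons ν t ih =>
    obtain ⟨hνt, hndt⟩ := List.nodup_cons.mp hnd
    simp only [List.map_cons, List.prod_cons, List.length_cons]
    rcases List.mem_cons.mp h with rfl | hmt
    · rw [mul_assoc, prod_mul_g_notmem n t μ hνt, mul_smul_comm, ← mul_assoc, Γg_sq]
      rw [pow_succ]
      congr 1
      ring
    · have hμν : μ ≠ ν := fun e => hνt (e ▸ hmt)
      rw [mul_assoc, ih hndt hmt, mul_smul_comm, ← mul_assoc, Γg_anti n (Ne.symm hμν)]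
      simp only [pow_succ, mul_neg_one, neg_mul, mul_assoc, smul_neg, neg_smul, neg_neg]

lemma prod_sq (n : ℕ) (l : List (Fin n)) (hnd : l.Nodup) :
    (l.map (Γg n)).prod * (l.map (Γg n)).prod =
      ((-1 : ℂ) ^ (l.length * (l.length + 1) / 2)) • 1 := by
  induction l with
  | nil => simp
  | cons ν t ih =>
    obtain ⟨hνt, hndt⟩ := List.nodup_cons.mp hnd
    simp only [List.map_cons, List.prod_cons, List.length_cons]
    have harith : (t.length + 1) * (t.length + 1 + 1) / 2
        = (t.length + 1) + t.length * (t.length + 1) / 2 := by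
      have h1 : (t.length + 1) * (t.length + 1 + 1) = t.length * (t.length + 1) + 2 * (t.length + 1) := by ring
      obtain ⟨c, hc⟩ := Nat.even_mul_succ_self t.length
      omega
    calc Γg n ν * (List.map (Γg n) t).prod * (Γg n ν * (List.map (Γg n) t).prod)
        = Γg n ν * ((List.map (Γg n) t).prod * Γg n ν) * (List.map (Γg n) t).prod := by
          noncomm_ring
      _ = ((-1 : ℂ) ^ t.length) • (Γg n ν * Γg n ν * ((List.map (Γg n) t).prod * (List.map (Γg n) t).prod)) := by
          rw [prod_mul_g_notmem n t ν hνt]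
          simp only [mul_smul_comm, smul_mul_assoc, mul_assoc]
      _ = ((-1 : ℂ) ^ ((t.length + 1) * (t.length + 1 + 1) / 2)) • 1 := by
          rw [Γg_sq, ih hndt, harith, pow_add]
          simp only [mul_smul_comm, smul_smul, mul_one, pow_succ, neg_mul, one_mul, mul_neg]
          ring_nf
          rw [smul_neg, ← neg_smul]

/-- `Γ_I = Γ_{i₁} ⋯ Γ_{i_k}` with `i₁ < ⋯ < i_k` the elements of `I`. -/
def ΓI (n : ℕ) (I : Finset (Fin n)) : Cl n :=
  ((I.sort (· ≤ ·)).map (Γg n)).prod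

/-- `q_{a,b}(x) = a²x + xb² − 2axb`. -/
def qp {n : ℕ} (a b x : Cl n) : Cl n := a ^ 2 * x + x * b ^ 2 - 2 * a * x * b

/-- `s_{a,b}(x) = ax − xb`. -/
def sp {n : ℕ} (a b x : Cl n) : Cl n := a * x - x * b

/-- `σ_k = (−1)^{k(k+1)/2}`. -/
def σs (k : ℕ) : ℂ := (-1 : ℂ) ^ (k * (k + 1) / 2)

/-- every diagonal endomorphism with two prescribed eigenvalues (on `I`
and its complement) is associated to a monomial quadratic Clifford pair. -/
theorem stmt_2 (n : ℕ) (hn : 1 ≤ n) (I : Finset (Fin n)) (lam₁ lam₂ : ℂ) :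
    ∃ α β : ℂ,
      (∀ μ : Fin n, μ ∈ I → qp (α • ΓI n I) (β • ΓI n I) (Γg n μ) = lam₁ • Γg n μ) ∧
      (∀ μ : Fin n, μ ∉ I → qp (α • ΓI n I) (β • ΓI n I) (Γg n μ) = lam₂ • Γg n μ) := by
  set l := I.sort (· ≤ ·) with hl
  set k := I.card with hk
  have hlen : l.length = k := Finset.length_sort _
  have hnd : l.Nodup := Finset.sort_nodup _ _
  have hmeml : ∀ μ : Fin n, μ ∈ l ↔ μ ∈ I := fun μ => Finset.mem_sort _
  set s : ℂ := (-1 : ℂ) ^ (k * (k + 1) / 2) with hs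
  set ε : ℂ := (-1 : ℂ) ^ k with hε
  have hs2 : s * s = 1 := by rw [hs, ← pow_add, ← two_mul, pow_mul]; norm_num
  have hε2 : ε * ε = 1 := by rw [hε, ← pow_add, ← two_mul, pow_mul]; norm_num
  set P : Cl n := ΓI n I with hP
  have hPP : P * P = s • 1 := by rw [hP, ΓI, ← hl, prod_sq n l hnd, hlen]
  have hmem : ∀ μ ∈ I, P * Γg n μ = (-ε) • (Γg n μ * P) := by
    intro μ hμ
    rw [hP, ΓI, ← hl, prod_mul_g_mem n l μ hnd ((hmeml μ).mpr hμ), hlen]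
  have hnot : ∀ μ ∉ I, P * Γg n μ = ε • (Γg n μ * P) := by
    intro μ hμ
    rw [hP, ΓI, ← hl, prod_mul_g_notmem n l μ (fun e => hμ ((hmeml μ).mp e)), hlen]
  obtain ⟨u, hu⟩ := IsAlgClosed.exists_pow_nat_eq (k := ℂ) (lam₁ * s) zero_lt_two
  obtain ⟨v, hv⟩ := IsAlgClosed.exists_pow_nat_eq (k := ℂ) (lam₂ * s) zero_lt_two
  refine ⟨(u + v) / 2, ε * (u - v) / 2, ?_, ?_⟩
  all_goals intro μ hμ
  all_goals set α : ℂ := (u + v) / 2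
  all_goals set β : ℂ := ε * (u - v) / 2
  all_goals set x := Γg n μ with hx
  all_goals have ha : (α • P) ^ 2 = (α * α * s) • 1 := by rw [sq, smul_mul_assoc, mul_smul_comm, smul_smul, hPP, smul_smul]
  all_goals have hb : (β • P) ^ 2 = (β * β * s) • 1 := by rw [sq, smul_mul_assoc, mul_smul_comm, smul_smul, hPP, smul_smul]
  all_goals have htwo : (2 : Cl n) = (2 : ℂ) • 1 := by rw [Algebra.smul_def, mul_one, map_ofNat]
  all_goals rw [qp, ha, hb, smul_mul_assoc, one_mul, mul_smul_comm, mul_one]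
  · -- μ ∈ I
    have h1 : P * x * P = (-(ε * s)) • x := by
      rw [hmem μ hμ, smul_mul_assoc, mul_assoc, hPP, mul_smul_comm, mul_one, smul_smul]
      module
    have h2 : 2 * (α • P) * x * (β • P) = (2 * α * β * (-(ε * s))) • x := by
      rw [htwo]
      simp only [smul_mul_assoc, mul_smul_comm, smul_smul, one_mul]
      rw [h1, smul_smul]
      congr 1
      ring
    rw [h2, ← add_smul, ← sub_smul]
    congr 1
    linear_combination s * hu + lam₁ * hs2 + (s * ((u - v) ^ 2 / 4 + (u ^ 2 - v ^ 2) / 2)) * hε2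
  · -- μ ∉ I
    have h1 : P * x * P = (ε * s) • x := by
      rw [hnot μ hμ, smul_mul_assoc, mul_assoc, hPP, mul_smul_comm, mul_one, smul_smul]
    have h2 : 2 * (α • P) * x * (β • P) = (2 * α * β * (ε * s)) • x := by
      rw [htwo]
      simp only [smul_mul_assoc, mul_smul_comm, smul_smul, one_mul]
      rw [h1, smul_smul]
      congr 1
      ring
    rw [h2, ← add_smul, ← sub_smul]
    congr 1
    linear_combination s * hv + lam₂ * hs2 + (s * ((u - v) ^ 2 / 4 - (u ^ 2 - v ^ 2) / 2)) * hε2
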